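/- For every nonempty factor U of the Tribonacci word t, there exists a factor u of t and δ ∈ {-1,0,1} such that the Parikh vector of U equals (|u|+δ, |u|₀, |u|₁); moreover, if |U| ≥ 3 then |u| < |U|. -/

import Mathlib

/-- The Tribonacci morphism τ: 0↦01, 1↦02, 2↦0, extended to words. -/
def tau : List (Fin 3) → List (Fin 3) :=
  fun w => w.flatMap (fun a => if a = 0 then [0, 1] else if a = 1 then [0, 2] else [0])

/-- The Tribonacci word, the fixed point of τ starting with 0.
Since τⁿ(0) is a prefix of τⁿ⁺¹(0) and |τ^(n+1)(0)| > n, this is well defined. -/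
def trib : ℕ → Fin 3 := fun n => (tau^[n + 1] [0]).getD n 0

/-- `u` is a (finite, contiguous) factor of the Tribonacci word. -/
def IsFactor (u : List (Fin 3)) : Prop :=
  ∃ i : ℕ, u = (List.range u.length).map (fun j => trib (i + j))

/-!
Since `τ(t) = t`, the word `t` is the concatenation of the blocks `τ(t₀) τ(t₁) ⋯`, each of
length one or two and beginning with `0`. If position `i` lies in block `k` and position `i + n`
in block `m`, then `U = t[i, i + n)` and `u = t[k, m)` satisfy `0ʳ U = τ(u) 0ᵉ` with `r, e ≤ 1`.
As `Ψ(τ u) = (|u|, |u|₀, |u|₁)`, this gives the Parikh vector of `U` with `δ = e - r`. Finally,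
`22` is not a factor of `t`, so `τ` strictly lengthens factors of length at least two, whence
`|u| < |U|`.
-/

namespace Tribonacci

open List

theorem tau_append (w w' : List (Fin 3)) : tau (w ++ w') = tau w ++ tau w' := by
  simp [tau]

theorem tau_prefix {w w' : List (Fin 3)} (h : w <+: w') : tau w <+: tau w' := by
  obtain ⟨v, rfl⟩ := h
  exact ⟨tau v, (tau_append w v).symm⟩

theorem count_zero_tau (w : List (Fin 3)) : (tau w).count 0 = w.length := by
  induction w with
  | nil => rfl
  | cons a w ih => fin_cases a <;> simp_all [tau]

theorem count_one_tau (w : List (Fin 3)) : (tau w).count 1 = w.count 0 := by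
  induction w with
  | nil => rfl
  | cons a w ih => fin_cases a <;> simp_all [tau]

theorem count_two_tau (w : List (Fin 3)) : (tau w).count 2 = w.count 1 := by
  induction w with
  | nil => rfl
  | cons a w ih => fin_cases a <;> simp_all [tau]

theorem one_le_length_tau_singleton (a : Fin 3) : 1 ≤ (tau [a]).length := by
  fin_cases a <;> decide

theorem length_tau_singleton_le_two (a : Fin 3) : (tau [a]).length ≤ 2 := by
  fin_cases a <;> decide

theorem length_tau (w : List (Fin 3)) : (tau w).length = w.length + w.count 0 + w.count 1 := by
  induction w with
  | nil => rfl
  | cons a w ih => fin_cases a <;> simp_all [tau] <;> omega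

theorem tau_iterate_prefix_succ (N : ℕ) : tau^[N] [0] <+: tau^[N + 1] [0] := by
  induction N with
  | zero => exact ⟨[1], rfl⟩
  | succ N ih =>
    rw [Function.iterate_succ_apply', Function.iterate_succ_apply']
    exact tau_prefix ih

theorem tau_iterate_prefix_of_le {M N : ℕ} (h : M ≤ N) : tau^[M] [0] <+: tau^[N] [0] := by
  induction N, h using Nat.le_induction with
  | base => exact prefix_rfl
  | succ N _ ih => exact ih.trans (tau_iterate_prefix_succ N)

theorem lt_length_tau_iterate (N : ℕ) : N < (tau^[N] [0]).length := by
  induction N with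
  | zero => simp
  | succ N ih =>
    have h0 : 0 < (tau^[N] [0]).count 0 :=
      count_pos_iff.2 ((tau_iterate_prefix_of_le N.zero_le).subset (mem_singleton_self 0))
    rw [Function.iterate_succ_apply', length_tau]
    omega

theorem trib_eq_getElem {N j : ℕ} (hj : j < (tau^[N] [0]).length) :
    trib j = (tau^[N] [0])[j] := by
  have hj' := lt_length_tau_iterate (j + 1)
  rw [trib, getD_eq_getElem _ _ (by omega)]
  rcases le_total (j + 1) N with h | h
  · exact (tau_iterate_prefix_of_le h).getElem _
  · exact ((tau_iterate_prefix_of_le h).getElem _).symm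

def factor (i n : ℕ) : List (Fin 3) := (range n).map fun j => trib (i + j)

@[simp]
theorem length_factor (i n : ℕ) : (factor i n).length = n := by
  simp [factor]

theorem isFactor_factor (i n : ℕ) : IsFactor (factor i n) :=
  ⟨i, by simp [factor]⟩

theorem factor_add (i a b : ℕ) : factor i (a + b) = factor i a ++ factor (i + a) b := by
  simp [factor, range_add, Nat.add_assoc]

theorem factor_one (i : ℕ) : factor i 1 = [trib i] := by
  simp [factor]

theorem factor_zero_eq_take {N n : ℕ} (hn : n ≤ (tau^[N] [0]).length) :
    factor 0 n = (tau^[N] [0]).take n :=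
  ext_getElem (by simp [hn]) fun j hj _ => by
    simp only [factor, getElem_map, getElem_range, getElem_take, zero_add]
    exact trib_eq_getElem (by simp at hj; omega)

/-- Since `τ(t) = t`, the image `τ(t_k)` of the `k`-th letter occupies the positions
`[blockStart k, blockStart (k + 1))` of `t`. -/
def blockStart (k : ℕ) : ℕ := (tau (factor 0 k)).length

theorem tau_factor_zero (k : ℕ) : tau (factor 0 k) = factor 0 (blockStart k) := by
  have hk : k ≤ (tau^[k] [0]).length := (lt_length_tau_iterate k).le
  have hpre : tau (factor 0 k) <+: tau^[k + 1] [0] := by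
    rw [factor_zero_eq_take hk, Function.iterate_succ_apply']
    exact tau_prefix (take_prefix _ _)
  rw [prefix_iff_eq_take.1 hpre, blockStart, factor_zero_eq_take hpre.length_le]

theorem blockStart_add (k d : ℕ) :
    blockStart (k + d) = blockStart k + (tau (factor k d)).length := by
  simp [blockStart, factor_add, tau_append]

theorem tau_factor (k d : ℕ) :
    tau (factor k d) = factor (blockStart k) (tau (factor k d)).length := by
  have h := tau_factor_zero (k + d)
  rw [factor_add, tau_append, tau_factor_zero, blockStart_add, factor_add, zero_add,
    zero_add] at h
  exact append_cancel_left h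

theorem blockStart_succ (k : ℕ) :
    blockStart (k + 1) = blockStart k + (tau [trib k]).length := by
  rw [blockStart_add, factor_one]

theorem trib_blockStart (k : ℕ) : trib (blockStart k) = 0 := by
  have h := congrArg (·[0]?) (tau_factor k 1)
  rw [factor_one] at h
  generalize trib k = a at h
  fin_cases a <;> simpa [tau, factor] using h.symm

theorem factor_blockStart_of_le_one {k e : ℕ} (he : e ≤ 1) :
    factor (blockStart k) e = replicate e 0 := by
  interval_cases e
  · rfl
  · rw [factor_one, trib_blockStart]
    rfl

theorem blockStart_lt_succ (k : ℕ) : blockStart k < blockStart (k + 1) := by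
  have := one_le_length_tau_singleton (trib k)
  rw [blockStart_succ]
  omega

theorem strictMono_blockStart : StrictMono blockStart :=
  strictMono_nat_of_lt_succ blockStart_lt_succ

theorem blockStart_succ_le (k : ℕ) : blockStart (k + 1) ≤ blockStart k + 2 := by
  have := length_tau_singleton_le_two (trib k)
  rw [blockStart_succ]
  omega

theorem exists_blockStart_le_lt (j : ℕ) :
    ∃ k, blockStart k ≤ j ∧ j < blockStart (k + 1) := by
  induction j with
  | zero => exact ⟨0, le_rfl, blockStart_lt_succ 0⟩
  | succ j ih =>
    obtain ⟨k, hk, hk'⟩ := ih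
    rcases (Nat.succ_le_of_lt hk').lt_or_eq with h | h
    · exact ⟨k, by omega, h⟩
    · exact ⟨k + 1, h.ge, by have := blockStart_lt_succ (k + 1); omega⟩

theorem trib_succ_eq_zero_of_eq_two {j : ℕ} (h : trib j = 2) : trib (j + 1) = 0 := by
  obtain ⟨k, hk, hk'⟩ := exists_blockStart_le_lt j
  have hj : j ≠ blockStart k := by
    rintro rfl
    simp [trib_blockStart] at h
  have := blockStart_succ_le k
  rw [show j + 1 = blockStart (k + 1) by omega, trib_blockStart]

theorem three_le_length_tau_factor_two (k : ℕ) : 3 ≤ (tau (factor k 2)).length := by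
  have h := @trib_succ_eq_zero_of_eq_two k
  rw [factor_add k 1 1, factor_one, factor_one, singleton_append]
  generalize trib k = a, trib (k + 1) = b at h ⊢
  fin_cases a <;> fin_cases b <;> simp_all [tau]

theorem blockStart_add_lt {k d : ℕ} (hd : 2 ≤ d) : blockStart k + d < blockStart (k + d) := by
  obtain ⟨d, rfl⟩ := Nat.exists_eq_add_of_le hd
  have h2 := three_le_length_tau_factor_two k
  have hd := length_tau (factor (k + 2) d)
  rw [blockStart_add, factor_add, tau_append, length_append]
  simp only [length_factor] at hd
  omega

theorem sub_lt_of_lt_blockStart_succ {i n k m : ℕ} (hi : i < blockStart (k + 1))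
    (hm : blockStart m ≤ i + n) (hn : 3 ≤ n) : m - k < n := by
  by_contra! h
  have := blockStart_add_lt (k := k + 1) (d := m - (k + 1)) (by omega)
  rw [show k + 1 + (m - (k + 1)) = m by omega] at this
  omega

theorem replicate_append_factor_eq {i n k m r e : ℕ} (hkm : k ≤ m) (hi : blockStart k + r = i)
    (hm : blockStart m + e = i + n) (hr : r ≤ 1) (he : e ≤ 1) :
    replicate r 0 ++ factor i n = tau (factor k (m - k)) ++ replicate e 0 := by
  have hlen := blockStart_add k (m - k)
  rw [Nat.add_sub_cancel' hkm] at hlen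
  calc replicate r 0 ++ factor i n
      = factor (blockStart k) (r + n) := by
        rw [factor_add, hi, factor_blockStart_of_le_one hr]
    _ = factor (blockStart k) ((tau (factor k (m - k))).length + e) := by congr 1; omega
    _ = tau (factor k (m - k)) ++ replicate e 0 := by
        rw [factor_add, ← tau_factor, ← hlen, factor_blockStart_of_le_one he]

theorem parikh_of_replicate_append_eq_tau_append {U u : List (Fin 3)} {r e : ℕ}
    (h : replicate r 0 ++ U = tau u ++ replicate e 0) :
    U.count 0 + r = u.length + e ∧ U.count 1 = u.count 0 ∧ U.count 2 = u.count 1 := by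
  have h0 := congrArg (count 0) h
  have h1 := congrArg (count 1) h
  have h2 := congrArg (count 2) h
  simp only [count_append, count_replicate_self, count_replicate, count_zero_tau, count_one_tau,
    count_two_tau, Fin.reduceBEq, Bool.false_eq_true, reduceIte] at h0 h1 h2
  omega

end Tribonacci

open Tribonacci

theorem tribonacci_parikh_desubstitution :
    ∀ U : List (Fin 3), IsFactor U → U ≠ [] →
      ∃ (u : List (Fin 3)) (δ : ℤ), IsFactor u ∧ δ ∈ ({-1, 0, 1} : Set ℤ) ∧
        (U.count 0 : ℤ) = (u.length : ℤ) + δ ∧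
        U.count 1 = u.count 0 ∧ U.count 2 = u.count 1 ∧
        (3 ≤ U.length → u.length < U.length) := by
  rintro U ⟨i, hU⟩ -
  obtain ⟨k, hk, hk'⟩ := exists_blockStart_le_lt i
  obtain ⟨m, hm, hm'⟩ := exists_blockStart_le_lt (i + U.length)
  obtain ⟨r, hr⟩ := Nat.exists_eq_add_of_le hk
  obtain ⟨e, he⟩ := Nat.exists_eq_add_of_le hm
  have hr1 : r ≤ 1 := by have := blockStart_succ_le k; omega
  have he1 : e ≤ 1 := by have := blockStart_succ_le m; omega
  have hkm : k ≤ m := Nat.lt_succ_iff.1 <| strictMono_blockStart.lt_iff_lt.1 <|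
    show blockStart k < blockStart (m + 1) by omega
  have hdecomp := replicate_append_factor_eq hkm hr.symm he.symm hr1 he1
  rw [show factor i U.length = U from hU.symm] at hdecomp
  obtain ⟨hcount0, hcount1, hcount2⟩ := parikh_of_replicate_append_eq_tau_append hdecomp
  refine ⟨factor k (m - k), e - r, isFactor_factor k (m - k), ?_, ?_, hcount1, hcount2, ?_⟩
  · simp only [Set.mem_insert_iff, Set.mem_singleton_iff]
    omega
  · rw [length_factor] at hcount0 ⊢
    omega
  · rw [length_factor]
    exact sub_lt_of_lt_blockStart_succ hk' hm
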